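/- arXiv:2308.13424 — 4 statements merged into one kernel-verified Lean document; each statement's English description precedes it below -/
import Mathlib

section
/- Fix an integer L ≥ 1 and real numbers R, ε ∈ (0,1). For every sufficiently large n there exists an integer q with 2 ≤ q ≤ 2^{4/ε}, a finite alphabet Σ of size q, and a code C ⊆ Σ^n with |C| ≥ q^{Rn}/2 that is ((L/(L+1))·(1−R−ε), L)-list-decodable. -/
/-!
Random coding with expurgation. Take `q = 2 ^ k` with `k = ⌈3 / ε⌉` and `2K` random words of
`Fin n → Fin q`, where `K ≈ q ^ (R n) / 2`, and let `e = ⌊p n⌋` for `p = L / (L + 1) * (1 - R - ε)`.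
Call a set of `L + 1` indices whose words lie in one Hamming ball of radius `e` a cluster, and
likewise a pair of indices with equal words (a cluster of radius `0`). A ball has at most
`2 ^ n * q ^ e` points, and the factor `2 ^ (n (L + 1))` lost there is absorbed by
`q ^ (ε n L) ≥ 2 ^ (3 n L)`; so the expected number of clusters is at most `K`, and for some choice
of words, deleting one index from each cluster leaves at least `K` distinct words with no `L + 1`
of them in a ball of radius `e`. When `R + ε ≥ 1` the radius is nonpositive and the whole space
is such a code.
-/

/-- A code `C ⊆ A^n` is `(p, L)`-list-decodable if every Hamming ball of
radius `p·n` contains at most `L` codewords. -/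
def ListDecodable {n : ℕ} {A : Type*} [DecidableEq A] (C : Finset (Fin n → A)) (p : ℝ) (L : ℕ) : Prop :=
  ∀ y : Fin n → A, (C.filter (fun c => (hammingDist y c : ℝ) ≤ p * n)).card ≤ L

open Finset

theorem card_filter_forall_mem_mul_pow {κ β : Type*} [Fintype κ] [DecidableEq κ] [Fintype β]
    [DecidableEq β] (s : Finset κ) (B : Finset β) :
    #{f : κ → β | ∀ i ∈ s, f i ∈ B} * Fintype.card β ^ #s =
      #B ^ #s * Fintype.card β ^ Fintype.card κ := by
  have hpi : ({f : κ → β | ∀ i ∈ s, f i ∈ B} : Finset (κ → β)) =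
      Fintype.piFinset fun i => if i ∈ s then B else univ := by
    ext f
    simp only [mem_filter, mem_univ, true_and, Fintype.mem_piFinset]
    exact ⟨fun h i => by split_ifs with hi <;> simp [h i, hi],
      fun h i hi => by simpa [hi] using h i⟩
  rw [hpi, Fintype.card_piFinset, ← card_compl_add_card s, pow_add]
  simp only [apply_ite card, card_univ, prod_ite, prod_const, filter_mem_eq_inter, univ_inter]
  rw [show ({i | i ∉ s} : Finset κ) = sᶜ by ext; simp]
  ring

theorem exists_subset_card_le_card_add_forall_not_subset {α : Type*} [DecidableEq α]
    (U : Finset α) (𝒮 : Finset (Finset α)) (h𝒮 : ∀ s ∈ 𝒮, s.Nonempty) :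
    ∃ T ⊆ U, #U ≤ #T + #𝒮 ∧ ∀ s ∈ 𝒮, ¬s ⊆ T := by
  induction 𝒮 using Finset.induction_on with
  | empty => exact ⟨U, Subset.rfl, by simp, by simp⟩
  | insert s 𝒮 hs ih =>
    obtain ⟨T, hTU, hcard, hT⟩ := ih fun t ht => h𝒮 t (mem_insert_of_mem ht)
    obtain ⟨i, hi⟩ := h𝒮 s (mem_insert_self s 𝒮)
    refine ⟨T.erase i, (erase_subset i T).trans hTU, ?_, ?_⟩
    · have := pred_card_le_card_erase (s := T) (a := i)
      rw [card_insert_of_notMem hs]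
      omega
    · intro t ht htT
      rcases mem_insert.1 ht with rfl | ht
      · exact notMem_erase i T (htT hi)
      · exact hT t ht (htT.trans (erase_subset i T))

theorem card_filter_hammingDist_le_zero_le_one {ι α : Type*} [Fintype ι] [DecidableEq α]
    (C : Finset (ι → α)) (y : ι → α) : #{c ∈ C | hammingDist y c ≤ 0} ≤ 1 :=
  card_le_one.2 fun a ha b hb => by
    simp only [mem_filter, nonpos_iff_eq_zero, hammingDist_eq_zero] at ha hb
    exact ha.2.symm.trans hb.2

section Hamming

variable {ι α : Type*} [Fintype ι] [DecidableEq ι] [Fintype α] [DecidableEq α]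

theorem card_filter_forall_notMem_eq_pow (S : Finset ι) (y : ι → α) :
    #{c : ι → α | ∀ i ∉ S, c i = y i} = Fintype.card α ^ #S := by
  have hpi : ({c : ι → α | ∀ i ∉ S, c i = y i} : Finset (ι → α)) =
      Fintype.piFinset fun i => if i ∈ S then univ else {y i} := by
    ext c
    simp only [mem_filter, mem_univ, true_and, Fintype.mem_piFinset]
    exact ⟨fun h i => by split_ifs with hi <;> simp [h i, hi],
      fun h i hi => by simpa [hi] using h i⟩
  rw [hpi, Fintype.card_piFinset]
  simp only [apply_ite card, card_univ, card_singleton, Fintype.prod_ite_mem, prod_const]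

theorem card_hammingBall_le [Nonempty α] (y : ι → α) (e : ℕ) :
    #{c : ι → α | hammingDist y c ≤ e} ≤ 2 ^ Fintype.card ι * Fintype.card α ^ e := by
  set 𝒮 : Finset (Finset ι) := {S | #S ≤ e}
  have hcover : ({c | hammingDist y c ≤ e} : Finset (ι → α)) ⊆
      𝒮.biUnion fun S => {c | ∀ i ∉ S, c i = y i} := by
    intro c hc
    simp only [𝒮, mem_filter, mem_univ, true_and, mem_biUnion] at hc ⊢
    exact ⟨({i | y i ≠ c i} : Finset ι), hc, fun i hi => by simpa [eq_comm] using hi⟩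
  calc #{c : ι → α | hammingDist y c ≤ e}
      ≤ ∑ S ∈ 𝒮, #{c : ι → α | ∀ i ∉ S, c i = y i} := (card_le_card hcover).trans card_biUnion_le
    _ ≤ ∑ _S ∈ 𝒮, Fintype.card α ^ e := by
        refine sum_le_sum fun S hS => ?_
        rw [card_filter_forall_notMem_eq_pow]
        exact Nat.pow_le_pow_right Fintype.card_pos (mem_filter.1 hS).2
    _ ≤ 2 ^ Fintype.card ι * Fintype.card α ^ e := by
        rw [sum_const, smul_eq_mul]
        gcongr
        exact (card_filter_le _ _).trans (by simp)

end Hamming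

section Clusters

variable {κ ι α : Type*} [Fintype κ] [DecidableEq κ] [Fintype ι] [DecidableEq ι] [Fintype α]
  [DecidableEq α]

def clusteredSets (f : κ → ι → α) (r m : ℕ) : Finset (Finset κ) :=
  {s ∈ powersetCard m univ | ∃ y, ∀ i ∈ s, hammingDist y (f i) ≤ r}

theorem sum_card_clusteredSets_mul_le (r m V : ℕ)
    (hV : ∀ y : ι → α, #{c | hammingDist y c ≤ r} ≤ V) :
    (∑ f : κ → ι → α, #(clusteredSets f r m)) * Fintype.card (ι → α) ^ m ≤
      Fintype.card (ι → α) * (Fintype.card κ).choose m * V ^ m *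
        Fintype.card (ι → α) ^ Fintype.card κ := by
  set Q := Fintype.card (ι → α)
  set ball : (ι → α) → Finset (ι → α) := fun y => {c | hammingDist y c ≤ r}
  have hunion (f : κ → ι → α) :
      #(clusteredSets f r m) ≤ ∑ y, #{s ∈ powersetCard m univ | ∀ i ∈ s, f i ∈ ball y} := by
    refine (card_le_card fun s hs => ?_).trans card_biUnion_le
    obtain ⟨hs, y, hy⟩ := mem_filter.1 hs
    exact mem_biUnion.2 ⟨y, mem_univ y, mem_filter.2 ⟨hs, by simpa [ball] using hy⟩⟩
  have hswap : ∑ f : κ → ι → α, ∑ y, #{s ∈ powersetCard m univ | ∀ i ∈ s, f i ∈ ball y} =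
      ∑ y, ∑ s ∈ powersetCard m univ, #{f : κ → ι → α | ∀ i ∈ s, f i ∈ ball y} := by
    simp only [card_filter]
    rw [sum_comm]
    exact sum_congr rfl fun y _ => sum_comm
  calc (∑ f : κ → ι → α, #(clusteredSets f r m)) * Q ^ m
      ≤ (∑ y, ∑ s ∈ powersetCard m univ, #{f : κ → ι → α | ∀ i ∈ s, f i ∈ ball y}) * Q ^ m := by
        rw [← hswap]
        gcongr with f
        exact hunion f
    _ = ∑ y, ∑ s ∈ powersetCard m univ, #(ball y) ^ m * Q ^ Fintype.card κ := by
        simp only [sum_mul]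
        refine sum_congr rfl fun y _ => sum_congr rfl fun s hs => ?_
        rw [← (mem_powersetCard.1 hs).2]
        exact card_filter_forall_mem_mul_pow s (ball y)
    _ ≤ ∑ _y : ι → α, ∑ _s ∈ powersetCard m (univ : Finset κ), V ^ m * Q ^ Fintype.card κ := by
        gcongr
        exact hV _
    _ = Q * (Fintype.card κ).choose m * V ^ m * Q ^ Fintype.card κ := by
        simp only [sum_const, card_powersetCard, card_univ, smul_eq_mul]
        ring

theorem exists_code_card_le_card_add_card_clusteredSets (f : κ → ι → α) (e L : ℕ) :
    ∃ C : Finset (ι → α),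
      Fintype.card κ ≤ #C + (#(clusteredSets f e (L + 1)) + #(clusteredSets f 0 2)) ∧
        ∀ y, #{c ∈ C | hammingDist y c ≤ e} ≤ L := by
  set 𝒮 := clusteredSets f e (L + 1) ∪ clusteredSets f 0 2
  have h𝒮 : ∀ s ∈ 𝒮, s.Nonempty := by
    intro s hs
    rw [← card_pos]
    rcases mem_union.1 hs with hs | hs <;> rw [(mem_powersetCard.1 (mem_filter.1 hs).1).2] <;> omega
  obtain ⟨T, -, hcard, hT⟩ := exists_subset_card_le_card_add_forall_not_subset univ 𝒮 h𝒮
  have hinj : Set.InjOn f T := by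
    intro i hi j hj hij
    by_contra hne
    refine hT {i, j} (mem_union_right _ (mem_filter.2 ⟨?_, f i, ?_⟩)) ?_
    · exact mem_powersetCard.2 ⟨subset_univ _, card_pair hne⟩
    · simp [hij]
    · exact insert_subset hi (singleton_subset_iff.2 hj)
  refine ⟨T.image f, ?_, fun y => ?_⟩
  · rw [card_image_of_injOn hinj]
    calc Fintype.card κ = #(univ : Finset κ) := card_univ.symm
      _ ≤ #T + #𝒮 := hcard
      _ ≤ #T + (#(clusteredSets f e (L + 1)) + #(clusteredSets f 0 2)) := by
        gcongr
        exact card_union_le _ _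
  · rw [filter_image]
    refine card_image_le.trans (not_lt.1 fun hlt => ?_)
    obtain ⟨s, hs, hscard⟩ := exists_subset_card_eq hlt
    refine hT s (mem_union_left _ (mem_filter.2 ⟨?_, y, fun i hi => (mem_filter.1 (hs hi)).2⟩))
      (hs.trans (filter_subset _ _))
    exact mem_powersetCard.2 ⟨subset_univ s, hscard⟩

theorem two_mul_sum_card_clusteredSets_le [Nonempty α] (r m V K : ℕ)
    (hV : ∀ y : ι → α, #{c | hammingDist y c ≤ r} ≤ V)
    (h : 2 * (Fintype.card κ).choose (m + 1) * V ^ (m + 1) ≤ K * Fintype.card (ι → α) ^ m) :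
    2 * ∑ f : κ → ι → α, #(clusteredSets f r (m + 1)) ≤
      K * Fintype.card (ι → α) ^ Fintype.card κ := by
  set Q := Fintype.card (ι → α)
  refine Nat.le_of_mul_le_mul_right ?_ (pow_pos (Fintype.card_pos (α := ι → α)) (m + 1))
  calc 2 * (∑ f : κ → ι → α, #(clusteredSets f r (m + 1))) * Q ^ (m + 1)
      = 2 * ((∑ f : κ → ι → α, #(clusteredSets f r (m + 1))) * Q ^ (m + 1)) := by ring
    _ ≤ 2 * (Q * (Fintype.card κ).choose (m + 1) * V ^ (m + 1) * Q ^ Fintype.card κ) :=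
        Nat.mul_le_mul_left 2 (sum_card_clusteredSets_mul_le r (m + 1) V hV)
    _ = Q * (2 * (Fintype.card κ).choose (m + 1) * V ^ (m + 1)) * Q ^ Fintype.card κ := by ring
    _ ≤ Q * (K * Q ^ m) * Q ^ Fintype.card κ := by gcongr
    _ = K * Q ^ Fintype.card κ * Q ^ (m + 1) := by ring

theorem exists_code_of_two_mul_choose_le [Nonempty α] (e L K V : ℕ)
    (hV : ∀ y : ι → α, #{c | hammingDist y c ≤ e} ≤ V)
    (hfar : 2 * (2 * K).choose (L + 1) * V ^ (L + 1) ≤ K * Fintype.card (ι → α) ^ L)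
    (hcoll : 2 * (2 * K).choose 2 ≤ K * Fintype.card (ι → α)) :
    ∃ C : Finset (ι → α), K ≤ #C ∧ ∀ y, #{c ∈ C | hammingDist y c ≤ e} ≤ L := by
  have hfar' := two_mul_sum_card_clusteredSets_le (κ := Fin (2 * K)) e L V K hV
    (by rwa [Fintype.card_fin])
  have hcoll' := two_mul_sum_card_clusteredSets_le (κ := Fin (2 * K)) (ι := ι) (α := α) 0 1 1 K
    (card_filter_hammingDist_le_zero_le_one univ)
    (by rwa [Fintype.card_fin, one_pow, mul_one, pow_one])
  have hsum : ∑ f : Fin (2 * K) → ι → α,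
      (#(clusteredSets f e (L + 1)) + #(clusteredSets f 0 2)) ≤ ∑ _f : Fin (2 * K) → ι → α, K := by
    rw [sum_add_distrib, sum_const, card_univ, Fintype.card_fun, Fintype.card_fin, smul_eq_mul]
    simp only [Fintype.card_fin] at hfar' hcoll'
    linarith
  obtain ⟨f, -, hf⟩ := exists_le_of_sum_le univ_nonempty hsum
  obtain ⟨C, hC, hCL⟩ := exists_code_card_le_card_add_card_clusteredSets f e L
  exact ⟨C, by simp only [Fintype.card_fin] at hC; omega, hCL⟩

end Clusters

-- `hfar` and `hcoll` compare the exponents of `2` in the hypotheses of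
-- `exists_code_of_two_mul_choose_le` for `K = 2 ^ b` and the ball bound `V = 2 ^ (n + k e)`.
theorem exists_code_card_two_pow (n k e L b : ℕ)
    (hfar : 1 + (b + 1) * (L + 1) + (n + k * e) * (L + 1) ≤ b + k * n * L)
    (hcoll : b + 3 ≤ k * n) :
    ∃ C : Finset (Fin n → Fin (2 ^ k)), 2 ^ b ≤ #C ∧
      ∀ y, #{c ∈ C | hammingDist y c ≤ e} ≤ L := by
  have hQ : Fintype.card (Fin n → Fin (2 ^ k)) = 2 ^ (k * n) := by simp [pow_mul]
  refine exists_code_of_two_mul_choose_le e L (2 ^ b) (2 ^ (n + k * e)) (fun y => ?_) ?_ ?_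
  · simpa [pow_add, pow_mul] using card_hammingBall_le y e
  · rw [hQ]
    calc 2 * (2 * 2 ^ b).choose (L + 1) * (2 ^ (n + k * e)) ^ (L + 1)
        ≤ 2 * (2 * 2 ^ b) ^ (L + 1) * (2 ^ (n + k * e)) ^ (L + 1) := by
          gcongr
          exact Nat.choose_le_pow _ _
      _ = 2 ^ (1 + (b + 1) * (L + 1) + (n + k * e) * (L + 1)) := by ring
      _ ≤ 2 ^ (b + k * n * L) := Nat.pow_le_pow_right two_pos hfar
      _ = 2 ^ b * (2 ^ (k * n)) ^ L := by ring
  · rw [hQ]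
    calc 2 * (2 * 2 ^ b).choose 2 ≤ 2 * (2 * 2 ^ b) ^ 2 := by
          gcongr
          exact Nat.choose_le_pow _ _
      _ = 2 ^ (2 * b + 3) := by ring
      _ ≤ 2 ^ (b + k * n) := Nat.pow_le_pow_right two_pos (by omega)
      _ = 2 ^ b * 2 ^ (k * n) := by ring

theorem listDecodable_of_forall_card_le_floor {n : ℕ} {A : Type*} [DecidableEq A]
    (C : Finset (Fin n → A)) (p : ℝ) (L : ℕ)
    (h : ∀ y, #{c ∈ C | hammingDist y c ≤ ⌊p * n⌋₊} ≤ L) : ListDecodable C p L := by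
  refine fun y => (card_le_card fun c hc => ?_).trans (h y)
  simp only [mem_filter] at hc ⊢
  exact ⟨hc.1, Nat.le_floor hc.2⟩

theorem listDecodable_univ_of_nonpos {n : ℕ} {A : Type*} [DecidableEq A] [Fintype A] {p : ℝ}
    (hp : p ≤ 0) {L : ℕ} (hL : 1 ≤ L) : ListDecodable (univ : Finset (Fin n → A)) p L := by
  refine listDecodable_of_forall_card_le_floor _ p L fun y => ?_
  rw [Nat.floor_of_nonpos (mul_nonpos_of_nonpos_of_nonneg hp n.cast_nonneg)]
  exact (card_filter_hammingDist_le_zero_le_one univ y).trans hL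

theorem exists_listDecodable_two_pow (L k n : ℕ) (hL : 1 ≤ L) (R ε : ℝ) (hR : 0 ≤ R)
    (hRε : R + ε < 1) (hk : 3 ≤ ε * k) (hn : 3 ≤ (1 - R) * n) :
    ∃ C : Finset (Fin n → Fin (2 ^ k)), ((2 ^ k : ℕ) : ℝ) ^ (R * n) / 2 ≤ #C ∧
      ListDecodable C ((L : ℝ) / ((L : ℝ) + 1) * (1 - R - ε)) L := by
  set p : ℝ := L / (L + 1) * (1 - R - ε)
  set e := ⌊p * n⌋₊
  set b := ⌊k * R * n⌋₊
  have hL1 : (1 : ℝ) ≤ L := by exact_mod_cast hL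
  have hk1 : (1 : ℝ) ≤ k := by nlinarith
  have hn3 : (3 : ℝ) ≤ n := by nlinarith
  have hpL : p * (L + 1) = L * (1 - R - ε) := by
    simp only [p]
    field_simp
  have hp : 0 ≤ p := mul_nonneg (by positivity) (by linarith)
  have he : (e : ℝ) ≤ p * n := Nat.floor_le (by positivity)
  have hb : (b : ℝ) ≤ k * R * n := Nat.floor_le (by positivity)
  have hfar : (1 + (b + 1) * (L + 1) + (n + k * e) * (L + 1) : ℝ) ≤ b + k * n * L := by
    have hbL : (b : ℝ) * L ≤ k * R * n * L := by gcongr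
    have heL : (k : ℝ) * e * (L + 1) ≤ k * (p * n) * (L + 1) := by gcongr
    have hεk : (3 : ℝ) * (n * L) ≤ ε * k * (n * L) := by gcongr
    have hnL : (L : ℝ) + 2 ≤ n * (2 * L - 1) := by nlinarith
    linear_combination hbL + heL + hεk + hnL + k * n * hpL
  have hcoll : (b + 3 : ℝ) ≤ k * n := by nlinarith
  obtain ⟨C, hCcard, hC⟩ := exists_code_card_two_pow n k e L b (by exact_mod_cast hfar)
    (by exact_mod_cast hcoll)
  refine ⟨C, ?_, listDecodable_of_forall_card_le_floor C p L hC⟩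
  calc ((2 ^ k : ℕ) : ℝ) ^ (R * n) / 2 = 2 ^ (k * R * n - 1 : ℝ) := by
        rw [Real.rpow_sub two_pos, Real.rpow_one, mul_assoc, Real.rpow_mul two_pos.le]
        norm_num
    _ ≤ 2 ^ (b : ℝ) := by
        gcongr
        · norm_num
        · linarith [Nat.lt_floor_add_one ((k : ℝ) * R * n)]
    _ ≤ #C := by exact_mod_cast hCcard

theorem rpow_div_two_le_card_univ {n q : ℕ} (hq : 1 ≤ q) {R : ℝ} (hR : R ≤ 1) :
    (q : ℝ) ^ (R * n) / 2 ≤ #(univ : Finset (Fin n → Fin q)) := by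
  have hq' : (1 : ℝ) ≤ q := by exact_mod_cast hq
  calc (q : ℝ) ^ (R * n) / 2 ≤ (q : ℝ) ^ (R * n) := half_le_self (by positivity)
    _ ≤ (q : ℝ) ^ (n : ℝ) := Real.rpow_le_rpow_of_exponent_le hq' (by nlinarith)
    _ = #(univ : Finset (Fin n → Fin q)) := by simp

theorem stmt_2 (L : ℕ) (hL : 1 ≤ L) (R ε : ℝ) (hR0 : 0 < R) (hR1 : R < 1)
    (hε0 : 0 < ε) (hε1 : ε < 1) :
    ∃ n₀ : ℕ, ∀ n : ℕ, n₀ ≤ n →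
      ∃ q : ℕ, 2 ≤ q ∧ (q : ℝ) ≤ 2 ^ (4 / ε) ∧
        ∃ C : Finset (Fin n → Fin q), (q : ℝ) ^ (R * n) / 2 ≤ (C.card : ℝ) ∧
          ListDecodable C ((L : ℝ) / ((L : ℝ) + 1) * (1 - R - ε)) L := by
  set k := ⌈3 / ε⌉₊
  have hk : 3 ≤ ε * k := (div_le_iff₀' hε0).1 (Nat.le_ceil _)
  have hk4 : (k : ℝ) ≤ 4 / ε := by
    have := Nat.ceil_lt_add_one (div_pos three_pos hε0).le
    rw [show (4 : ℝ) / ε = 3 / ε + 1 / ε by ring]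
    linarith [one_le_one_div hε0 hε1.le]
  refine ⟨⌈3 / (1 - R)⌉₊, fun n hn => ⟨2 ^ k, ?_, ?_, ?_⟩⟩
  · exact Nat.le_self_pow (Nat.ceil_pos.2 (by positivity)).ne' 2
  · rw [Nat.cast_pow, Nat.cast_ofNat, ← Real.rpow_natCast]
    exact Real.rpow_le_rpow_of_exponent_le one_le_two hk4
  rcases lt_or_ge (R + ε) 1 with hRε | hRε
  · have hn' : 3 ≤ (1 - R) * n := (div_le_iff₀' (by linarith)).1 (Nat.ceil_le.1 hn)
    exact exists_listDecodable_two_pow L k n hL R ε hR0.le hRε hk hn'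
  · refine ⟨univ, rpow_div_two_le_card_univ Nat.one_le_two_pow hR1.le,
      listDecodable_univ_of_nonpos (mul_nonpos_of_nonneg_of_nonpos (by positivity) ?_) hL⟩
    linarith
end

section
/- Let C ⊆ Σ^n be a code over a finite alphabet Σ of size q, let L ≥ 1 and let k be an integer with 0 ≤ k ≤ n. If |C| > L·q^k, then there exist L+1 pairwise distinct codewords c⁽⁰⁾, c⁽¹⁾, …, c⁽ᴸ⁾ ∈ C and a word y ∈ Σ^n such that d(y, c⁽ⁱ⁾) ≤ n − k − ⌊(n−k)/(L+1)⌋ for every i ∈ {0,1,…,L}. In particular, C is not (p, L)-list-decodable for any p with p·n ≥ n − k − ⌊(n−k)/(L+1)⌋. -/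
open Finset

section Hamming

variable {ι β : Type*}

theorem exists_injective_eqOn_of_mul_lt_card [Fintype β] (C : Finset (ι → β)) (K : Finset ι)
    {L : ℕ} (hC : L * Fintype.card β ^ #K < #C) :
    ∃ f : Fin (L + 1) → ι → β, Function.Injective f ∧ (∀ i, f i ∈ C) ∧
      ∀ j ∈ K, ∀ a b, f a j = f b j := by
  classical
  have hcard : #(univ : Finset (K → β)) * L < #C := by
    rwa [card_univ, Fintype.card_fun, Fintype.card_coe, mul_comm]
  obtain ⟨v, -, hv⟩ := exists_lt_card_fiber_of_mul_lt_card_of_maps_to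
    (f := fun (c : ι → β) (j : K) => c j) (fun c _ => mem_univ _) hcard
  obtain ⟨e⟩ : Nonempty (Fin (L + 1) ↪ {c ∈ C | (fun j : K => c j) = v}) :=
    Function.Embedding.nonempty_of_card_le (by rwa [Fintype.card_fin, Fintype.card_coe])
  refine ⟨fun i => e i, Subtype.val_injective.comp e.injective,
    fun i => (mem_filter.1 (e i).2).1, fun j hj a b => ?_⟩
  have hfiber : ∀ i, (e i : ι → β) j = v ⟨j, hj⟩ := fun i =>
    congrFun (mem_filter.1 (e i).2).2 ⟨j, hj⟩
  exact (hfiber a).trans (hfiber b).symm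

theorem exists_balanced_labelling (s : Finset ι) (r : ℕ) [NeZero r] :
    ∃ σ : ι → Fin r, ∀ i, #s / r ≤ #{j ∈ s | σ j = i} := by
  classical
  let e := s.equivFin
  refine ⟨fun j => if h : j ∈ s then Fin.ofNat r (e ⟨j, h⟩) else 0, fun i => ?_⟩
  -- label `i` is carried by the elements of positions `u * r + i`, `u < #s / r`, in `e`
  have hlt (u : Fin (#s / r)) : u * r + i < #s := by
    have hu : (u + 1) * r ≤ #s := (Nat.le_div_iff_mul_le (NeZero.pos r)).1 u.2
    nlinarith [i.2]
  calc #s / r = #(univ : Finset (Fin (#s / r))) := by simp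
    _ ≤ _ := card_le_card_of_injOn (fun u => (e.symm ⟨u * r + i, hlt u⟩ : ι)) ?_ ?_
  · intro u _
    simp [Fin.ext_iff, Nat.mod_eq_of_lt i.2]
  · intro u _ u' _ h
    have := congrArg Fin.val (e.symm.injective (Subtype.val_injective h))
    simp only [add_left_inj, mul_left_inj' (NeZero.ne r)] at this
    exact Fin.ext this

def splice {κ : Type*} (c : κ → ι → β) (σ : ι → κ) : ι → β := fun j => c (σ j) j

theorem hammingDist_splice_le [DecidableEq β] [Fintype ι] [DecidableEq ι] {κ : Type*} [DecidableEq κ]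
    {c : κ → ι → β} {K : Finset ι} (hc : ∀ j ∈ K, ∀ a b, c a j = c b j) (σ : ι → κ) (i : κ) :
    hammingDist (splice c σ) (c i) ≤ #{j ∈ Kᶜ | σ j ≠ i} := by
  refine card_le_card fun j hj => ?_
  replace hj : c (σ j) j ≠ c i j := (mem_filter.1 hj).2
  simp only [mem_filter, mem_compl]
  exact ⟨fun hjK => hj (hc j hjK _ _), fun h => hj (by rw [h])⟩

theorem exists_hammingDist_le_of_eqOn [DecidableEq β] [Fintype ι] [DecidableEq ι] {L : ℕ}
    {c : Fin (L + 1) → ι → β} {K : Finset ι} (hc : ∀ j ∈ K, ∀ a b, c a j = c b j) :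
    ∃ y : ι → β, ∀ i, hammingDist y (c i) ≤ #Kᶜ - #Kᶜ / (L + 1) := by
  obtain ⟨σ, hσ⟩ := exists_balanced_labelling Kᶜ (L + 1)
  refine ⟨splice c σ, fun i => ?_⟩
  have hsplit := card_filter_add_card_filter_not (s := Kᶜ) (σ · = i)
  simp only [← ne_eq] at hsplit
  calc hammingDist (splice c σ) (c i) ≤ #{j ∈ Kᶜ | σ j ≠ i} := hammingDist_splice_le hc σ i
    _ = #Kᶜ - #{j ∈ Kᶜ | σ j = i} := by omega
    _ ≤ #Kᶜ - #Kᶜ / (L + 1) := Nat.sub_le_sub_left (hσ i) _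

end Hamming

theorem not_listDecodable_of_hammingDist_le {n : ℕ} {A : Type*} [DecidableEq A]
    {C : Finset (Fin n → A)} {p : ℝ} {L : ℕ} {f : Fin (L + 1) → Fin n → A}
    (hf : Function.Injective f) (hfC : ∀ i, f i ∈ C) {y : Fin n → A}
    (hy : ∀ i, (hammingDist y (f i) : ℝ) ≤ p * n) : ¬ ListDecodable C p L := by
  intro hC
  have hball : #(univ : Finset (Fin (L + 1))) ≤ #{c ∈ C | (hammingDist y c : ℝ) ≤ p * n} :=
    card_le_card_of_injOn f (fun i _ => mem_filter.2 ⟨hfC i, hy i⟩) hf.injOn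
  have := hC y
  simp only [card_univ, Fintype.card_fin] at hball
  omega

theorem stmt_11_general {n : ℕ} {A : Type} [Fintype A] [DecidableEq A] (q : ℕ)
    (hq : Fintype.card A = q) (C : Finset (Fin n → A)) (L k : ℕ)
    (hk : k ≤ n) (hC : L * q ^ k < C.card) :
    (∃ (f : Fin (L + 1) → (Fin n → A)) (y : Fin n → A),
      Function.Injective f ∧ (∀ i, f i ∈ C) ∧
      ∀ i, hammingDist y (f i) ≤ n - k - (n - k) / (L + 1)) ∧
    ∀ p : ℝ, ((n - k - (n - k) / (L + 1) : ℕ) : ℝ) ≤ p * n → ¬ ListDecodable C p L := by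
  obtain ⟨K, -, hK⟩ := exists_subset_card_eq (s := (univ : Finset (Fin n))) (by simpa using hk)
  obtain ⟨f, hf, hfC, hfK⟩ := exists_injective_eqOn_of_mul_lt_card C K (by rwa [hK, hq])
  obtain ⟨y, hy⟩ := exists_hammingDist_le_of_eqOn hfK
  rw [card_compl, Fintype.card_fin, hK] at hy
  exact ⟨⟨f, y, hf, hfC, hy⟩, fun p hp => not_listDecodable_of_hammingDist_le hf hfC
    fun i => (Nat.cast_le.2 (hy i)).trans hp⟩

theorem stmt_11 {n : ℕ} {A : Type} [Fintype A] [DecidableEq A] (q : ℕ)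
    (hq : Fintype.card A = q) (C : Finset (Fin n → A)) (L k : ℕ)
    (hL : 1 ≤ L) (hk : k ≤ n) (hC : L * q ^ k < C.card) :
    (∃ (f : Fin (L + 1) → (Fin n → A)) (y : Fin n → A),
      Function.Injective f ∧ (∀ i, f i ∈ C) ∧
      ∀ i, hammingDist y (f i) ≤ n - k - (n - k) / (L + 1)) ∧
    ∀ p : ℝ, ((n - k - (n - k) / (L + 1) : ℕ) : ℝ) ≤ p * n → ¬ ListDecodable C p L :=
  stmt_11_general q hq C L k hk hC
end

section
/- Let p ∈ (0,1), let L ≥ 1 and n ≥ 1 be integers, and let M be an integer with M ≥ L²/p (so in particular M ≥ L). Let S₁, …, S_M be subsets of {1,…,n}, each of size at least p·n. Then there exist indices 1 ≤ j₁ < j₂ < ⋯ < j_L ≤ M such that |S_{j₁} ∩ S_{j₂} ∩ ⋯ ∩ S_{j_L}| ≥ (p^L/2)·n. -/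
/-!
Double counting pairs (J, x), with J an L-set of indices and x ∈ ⋂_{j ∈ J} S j, gives
∑_J |⋂_{j ∈ J} S j| = ∑ₓ C(d x, L), where d x counts the sets containing x; the degrees d x
average at least t = pM. As d ↦ C(d, L) is convex on ℕ, its tangent line at ⌊t⌋ bounds
∑ₓ C(d x, L) below by n times the piecewise linear interpolation of C(·, L) at t, which in turn
dominates t(t-1)⋯(t-L+1)/L! ≥ t^L/(2·L!) once L² ≤ t. Since C(M, L) p^L ≤ t^L/L!, some J has
|⋂_{j ∈ J} S j| at least the average p^L n/2.
-/

open Finset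

section OrderedRing

variable {ι R : Type*} [CommRing R] [LinearOrder R] [IsStrictOrderedRing R]

theorem prod_add_le_one_sub_mul_add_mul (s : Finset ι) {c : ι → R} (hc : ∀ i ∈ s, 0 ≤ c i)
    {θ : R} (hθ₀ : 0 ≤ θ) (hθ₁ : θ ≤ 1) :
    ∏ i ∈ s, (c i + θ) ≤ (1 - θ) * ∏ i ∈ s, c i + θ * ∏ i ∈ s, (c i + 1) := by
  induction s using Finset.cons_induction with
  | empty => simp
  | cons a s _ ih =>
    simp only [forall_mem_cons] at hc
    obtain ⟨hca, hc⟩ := hc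
    have hPQ : ∏ i ∈ s, c i ≤ ∏ i ∈ s, (c i + 1) :=
      prod_le_prod hc fun i _ ↦ le_add_of_nonneg_right zero_le_one
    rw [prod_cons, prod_cons, prod_cons]
    calc (c a + θ) * ∏ i ∈ s, (c i + θ)
        ≤ (c a + θ) * ((1 - θ) * ∏ i ∈ s, c i + θ * ∏ i ∈ s, (c i + 1)) := by
          gcongr
          exact ih hc
      _ ≤ _ := by nlinarith [mul_nonneg (mul_nonneg hθ₀ (sub_nonneg.2 hθ₁)) (sub_nonneg.2 hPQ)]

theorem one_sub_sum_le_prod_one_sub (s : Finset ι) {x : ι → R} (hx₀ : ∀ i ∈ s, 0 ≤ x i)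
    (hx₁ : ∀ i ∈ s, x i ≤ 1) : 1 - ∑ i ∈ s, x i ≤ ∏ i ∈ s, (1 - x i) := by
  induction s using Finset.cons_induction with
  | empty => simp
  | cons a s _ ih =>
    simp only [forall_mem_cons] at hx₀ hx₁
    rw [sum_cons, prod_cons]
    calc 1 - (x a + ∑ i ∈ s, x i) ≤ (1 - x a) * (1 - ∑ i ∈ s, x i) := by
          nlinarith [mul_nonneg hx₀.1 (sum_nonneg hx₀.2)]
      _ ≤ (1 - x a) * ∏ i ∈ s, (1 - x i) :=
          mul_le_mul_of_nonneg_left (ih hx₀.2 hx₁.2) (sub_nonneg.2 hx₁.1)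

end OrderedRing

theorem pow_div_two_le_prod_range_sub {t : ℝ} (L : ℕ) (ht : (L : ℝ) ^ 2 ≤ t) :
    t ^ L / 2 ≤ ∏ i ∈ range L, (t - i) := by
  rcases Nat.eq_zero_or_pos L with rfl | hL
  · norm_num
  have ht₀ : 0 < t := lt_of_lt_of_le (by positivity) ht
  have hgauss : ∑ i ∈ range L, (i : ℝ) ≤ t / 2 := by
    have : (∑ i ∈ range L, i) * 2 ≤ L ^ 2 := by
      rw [sum_range_id_mul_two, sq]
      exact Nat.mul_le_mul_left L (Nat.sub_le L 1)
    have := (Nat.cast_le (α := ℝ)).2 this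
    push_cast at this
    linarith
  have hfactor : ∏ i ∈ range L, (t - i) = t ^ L * ∏ i ∈ range L, (1 - i / t) := by
    rw [← card_range L, ← prod_const, card_range, ← prod_mul_distrib]
    refine prod_congr rfl fun i _ ↦ ?_
    field_simp
  have hhalf : 1 / 2 ≤ ∏ i ∈ range L, (1 - i / t) := by
    refine le_trans ?_ (one_sub_sum_le_prod_one_sub _ (fun i _ ↦ by positivity) fun i hi ↦ ?_)
    · rw [← sum_div, le_sub_comm, div_le_iff₀ ht₀]
      linarith
    · have hi : (i : ℝ) + 1 ≤ L := by exact_mod_cast mem_range.1 hi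
      rw [div_le_one ht₀]
      nlinarith
  rw [hfactor]
  nlinarith [pow_pos ht₀ L]

namespace Nat

theorem choose_succ_add_mul_choose_le (l m a : ℕ) :
    m.choose (l + 1) + a * m.choose l ≤ (m + a).choose (l + 1) := by
  induction a with
  | zero => simp
  | succ a ih =>
    have := choose_le_choose l (m.le_add_right a)
    rw [← add_assoc, choose_succ_succ]
    nlinarith

theorem choose_succ_le_choose_succ_add_mul (l m a : ℕ) :
    (m + a).choose (l + 1) ≤ m.choose (l + 1) + a * (m + a).choose l := by
  induction a with
  | zero => simp
  | succ a ih =>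
    have := choose_le_choose l (le_succ (m + a))
    rw [← add_assoc, choose_succ_succ]
    nlinarith

theorem choose_succ_add_sub_mul_choose_le (l m d : ℕ) :
    (m.choose (l + 1) : ℝ) + ((d : ℝ) - m) * m.choose l ≤ d.choose (l + 1) := by
  rcases le_total m d with h | h
  · obtain ⟨a, rfl⟩ := exists_add_of_le h
    have := choose_succ_add_mul_choose_le l m a
    push_cast
    rw [add_sub_cancel_left]
    exact_mod_cast this
  · obtain ⟨a, rfl⟩ := exists_add_of_le h
    have : ((d + a).choose (l + 1) : ℝ) ≤ d.choose (l + 1) + a * (d + a).choose l := by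
      exact_mod_cast choose_succ_le_choose_succ_add_mul l d a
    push_cast
    linarith

theorem cast_prod_range_sub (k L : ℕ) :
    ∏ i ∈ range L, ((k : ℝ) - i) = L ! * k.choose L := by
  rw [← descPochhammer_eval_eq_prod_range, descPochhammer_eval_eq_descFactorial,
    descFactorial_eq_factorial_mul_choose, cast_mul]

/-- The right side is `(l + 1)!` times the linear interpolation of `(·).choose (l + 1)` between
`m` and `m + 1`, whose slope is `m.choose l`. -/
theorem prod_range_sub_le_factorial_mul {l m : ℕ} (hlm : l ≤ m) {θ : ℝ} (hθ₀ : 0 ≤ θ)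
    (hθ₁ : θ ≤ 1) :
    ∏ i ∈ range (l + 1), ((m : ℝ) + θ - i) ≤ (l + 1)! * (m.choose (l + 1) + θ * m.choose l) := by
  have hc : ∀ i ∈ range (l + 1), (0 : ℝ) ≤ m - i := fun i hi ↦ by
    have : i ≤ m := by have := mem_range.1 hi; omega
    simpa using (cast_le (α := ℝ)).2 this
  have := prod_add_le_one_sub_mul_add_mul _ hc hθ₀ hθ₁
  have hsucc : ∀ i ∈ range (l + 1), (m : ℝ) - i + 1 = ((m + 1 : ℕ) : ℝ) - i := fun i _ ↦ by
    push_cast; ring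
  rw [prod_congr rfl hsucc, cast_prod_range_sub, cast_prod_range_sub, choose_succ_succ] at this
  simp only [sub_add_eq_add_sub] at this
  push_cast at this
  linarith

end Nat

theorem sum_card_filter_mem {α ι : Type*} [Fintype α] [DecidableEq α] [Fintype ι]
    (S : ι → Finset α) : ∑ x, #{j | x ∈ S j} = ∑ j, #(S j) := by
  simp_rw [card_eq_sum_ite (subset_univ (S _)), card_filter]
  exact sum_comm

theorem sum_card_inf_powersetCard {α ι : Type*} [Fintype α] [DecidableEq α] [Fintype ι]
    [DecidableEq ι] (S : ι → Finset α) (L : ℕ) :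
    ∑ J ∈ powersetCard L univ, #(J.inf S) = ∑ x, (#{j | x ∈ S j}).choose L := by
  have hmem : ∀ (J : Finset ι) x, x ∈ J.inf S ↔ J ⊆ ({j | x ∈ S j} : Finset ι) := fun J x ↦ by
    simp [mem_inf, subset_iff]
  calc ∑ J ∈ powersetCard L univ, #(J.inf S)
      = ∑ x, #{J ∈ powersetCard L univ | J ⊆ ({j | x ∈ S j} : Finset ι)} := by
        simp_rw [card_eq_sum_ite (subset_univ (inf _ S)), card_filter, ← hmem]
        exact sum_comm
    _ = _ := by
        refine sum_congr rfl fun x _ ↦ ?_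
        rw [← card_powersetCard]
        congr 1
        ext J
        simp [mem_powersetCard, and_comm]

theorem card_mul_le_sum_choose {α : Type*} (s : Finset α) (d : α → ℕ) {t : ℝ}
    (ht : #s * t ≤ ∑ x ∈ s, (d x : ℝ)) (l m : ℕ) :
    #s * (m.choose (l + 1) + (t - m) * m.choose l) ≤ ∑ x ∈ s, ((d x).choose (l + 1) : ℝ) := by
  have hlinear : ∑ x ∈ s, ((m.choose (l + 1) : ℝ) + ((d x : ℝ) - m) * m.choose l)
      = #s * m.choose (l + 1) + (∑ x ∈ s, (d x : ℝ) - #s * m) * m.choose l := by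
    simp only [sum_add_distrib, ← sum_mul, sum_sub_distrib, sum_const, nsmul_eq_mul]
  calc (#s : ℝ) * (m.choose (l + 1) + (t - m) * m.choose l)
      ≤ #s * m.choose (l + 1) + (∑ x ∈ s, (d x : ℝ) - #s * m) * m.choose l := by
        nlinarith [(m.choose l).cast_nonneg (α := ℝ)]
    _ ≤ ∑ x ∈ s, ((d x).choose (l + 1) : ℝ) :=
        hlinear ▸ sum_le_sum fun x _ ↦ Nat.choose_succ_add_sub_mul_choose_le l m (d x)

theorem pow_div_le_choose_floor_add {t : ℝ} (l : ℕ) (ht : ((l + 1 : ℕ) : ℝ) ^ 2 ≤ t) :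
    t ^ (l + 1) / (2 * (l + 1).factorial)
      ≤ ⌊t⌋₊.choose (l + 1) + (t - ⌊t⌋₊) * ⌊t⌋₊.choose l := by
  have ht₀ : 0 ≤ t := le_trans (by positivity) ht
  have hlt : l + 1 ≤ ⌊t⌋₊ := Nat.le_floor <| by
    have : (1 : ℝ) ≤ (l + 1 : ℕ) := by exact_mod_cast Nat.le_add_left 1 l
    nlinarith
  have hθ₀ : 0 ≤ t - ⌊t⌋₊ := sub_nonneg.2 (Nat.floor_le ht₀)
  have hθ₁ : t - ⌊t⌋₊ ≤ 1 := by linarith [Nat.lt_floor_add_one t]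
  have hinterp := Nat.prod_range_sub_le_factorial_mul (by omega : l ≤ ⌊t⌋₊) hθ₀ hθ₁
  rw [add_sub_cancel] at hinterp
  rw [div_le_iff₀ (by positivity)]
  have := (pow_div_two_le_prod_range_sub (l + 1) ht).trans hinterp
  linarith

theorem exists_card_eq_le_card_inf {α ι : Type*} [Fintype α] [DecidableEq α] [Fintype ι]
    [DecidableEq ι] (S : ι → Finset α) {L : ℕ} (hL : L ≤ Fintype.card ι) {c : ℝ}
    (hc : (Fintype.card ι).choose L * c ≤ ∑ x, ((#{j | x ∈ S j}).choose L : ℝ)) :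
    ∃ J : Finset ι, #J = L ∧ c ≤ #(J.inf S) := by
  rw [← Nat.cast_sum, ← sum_card_inf_powersetCard, Nat.cast_sum, ← card_univ,
    ← card_powersetCard, ← nsmul_eq_mul, ← sum_const] at hc
  obtain ⟨J, hJ, hle⟩ := exists_le_of_sum_le (powersetCard_nonempty.2 (by simpa using hL)) hc
  exact ⟨J, (mem_powersetCard.1 hJ).2, hle⟩

theorem stmt_17_general (p : ℝ) (hp0 : 0 < p) (hp1 : p < 1) (L n M : ℕ)
    (hL : 1 ≤ L) (hM : (L : ℝ) ^ 2 / p ≤ (M : ℝ))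
    (S : Fin M → Finset (Fin n)) (hS : ∀ j, p * n ≤ ((S j).card : ℝ)) :
    ∃ J : Finset (Fin M), J.card = L ∧ (p ^ L / 2) * n ≤ ((J.inf S).card : ℝ) := by
  obtain ⟨l, rfl⟩ : ∃ l, L = l + 1 := ⟨L - 1, by omega⟩
  have ht : ((l + 1 : ℕ) : ℝ) ^ 2 ≤ p * M := by rwa [div_le_iff₀ hp0, mul_comm] at hM
  have hLM : l + 1 ≤ M := by
    have : (1 : ℝ) ≤ (l + 1 : ℕ) := by exact_mod_cast Nat.le_add_left 1 l
    exact_mod_cast (show ((l + 1 : ℕ) : ℝ) ≤ M by nlinarith)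
  have hdeg : (#(univ : Finset (Fin n)) : ℝ) * (p * M) ≤ ∑ x, (#{j | x ∈ S j} : ℝ) := by
    rw [← Nat.cast_sum, sum_card_filter_mem, Nat.cast_sum]
    calc (#(univ : Finset (Fin n)) : ℝ) * (p * M) = ∑ _j : Fin M, p * n := by
          simp only [card_univ, Fintype.card_fin, sum_const, nsmul_eq_mul]; ring
      _ ≤ _ := sum_le_sum fun j _ ↦ hS j
  refine exists_card_eq_le_card_inf S (by simpa using hLM) ?_
  calc ((Fintype.card (Fin M)).choose (l + 1) : ℝ) * (p ^ (l + 1) / 2 * n)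
      ≤ (M : ℝ) ^ (l + 1) / (l + 1).factorial * (p ^ (l + 1) / 2 * n) := by
        gcongr
        simpa using Nat.choose_le_pow_div (l + 1) M
    _ = #(univ : Finset (Fin n)) * ((p * M) ^ (l + 1) / (2 * (l + 1).factorial)) := by
        simp only [card_univ, Fintype.card_fin]
        ring
    _ ≤ #(univ : Finset (Fin n)) * (⌊p * M⌋₊.choose (l + 1)
          + (p * M - ⌊p * M⌋₊) * ⌊p * M⌋₊.choose l) := by
        gcongr
        exact pow_div_le_choose_floor_add l ht
    _ ≤ _ := card_mul_le_sum_choose _ _ hdeg l _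

theorem stmt_17 (p : ℝ) (hp0 : 0 < p) (hp1 : p < 1) (L n M : ℕ)
    (hL : 1 ≤ L) (hn : 1 ≤ n) (hM : (L : ℝ) ^ 2 / p ≤ (M : ℝ))
    (S : Fin M → Finset (Fin n)) (hS : ∀ j, p * n ≤ ((S j).card : ℝ)) :
    ∃ J : Finset (Fin M), J.card = L ∧ (p ^ L / 2) * n ≤ ((J.inf S).card : ℝ) :=
  stmt_17_general p hp0 hp1 L n M hL hM S hS
end

section
/- For every R ∈ (0,1) there exists a constant α > 0 such that for all sufficiently large n for which k = Rn is an integer: if q is a prime power, C ⊆ 𝔽_q^n is an 𝔽_q-linear code of dimension k with minimum distance n − k + 1 (i.e., C is a linear MDS code), and C is ((2/3)·(1−R), 2)-list-decodable, then q ≥ 2^{αn}. -/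
/-!
An MDS code of dimension `k` contains, for every set `A` of `k - 1` coordinates, a codeword whose
zero set is exactly `A`. Fix four coordinates `D` and a block `P` of coordinates, and look at the
codewords whose zero sets are `A ∪ P` with `A` an `r`-subset of the remaining coordinates. There are
at least `binom(2r, r) ≥ 2 ^ r` of them but only `q ^ 4` possible restrictions to `D`, so when
`q ^ 4 < 2 ^ r` two of them, `u` and `v`, agree on `D`. The word that copies `u` on `D` and on about
`m / 3` further coordinates (`m = n - k`), copies `v` on another `m / 3` coordinates and vanishes
elsewhere is within distance `2m / 3` of all three codewords `0`, `u`, `v`. The common block `P`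
makes the zero sets of `u` and `v` overlap, which leaves room for those `2m / 3` coordinates when
`k` is large compared with `m`.
-/

open Finset

theorem Nat.two_pow_le_centralBinom (r : ℕ) : 2 ^ r ≤ r.centralBinom := by
  induction r with
  | zero => simp
  | succ r ih =>
    have h := Nat.succ_mul_centralBinom_succ r
    have : (r + 1) * 2 ^ (r + 1) ≤ (r + 1) * (r + 1).centralBinom := by
      rw [h, pow_succ]; nlinarith
    exact Nat.le_of_mul_le_mul_left this r.succ_pos

theorem hammingDist_add_card_le_of_eqOn {ι : Type*} [Fintype ι] {β : ι → Type*}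
    [∀ i, DecidableEq (β i)] {x y : ∀ i, β i} {S : Finset ι} (h : ∀ i ∈ S, x i = y i) :
    hammingDist x y + #S ≤ Fintype.card ι := by
  classical
  rw [hammingDist, ← card_union_of_disjoint]
  · exact card_le_univ _
  · exact disjoint_left.2 fun i hi hiS => (mem_filter.1 hi).2 (h i hiS)

theorem Nat.pow_lt_two_pow_of_cast_lt_rpow {q d r : ℕ} {x : ℝ} (hq : (q : ℝ) < 2 ^ x) (hd : d ≠ 0)
    (hx : d * x ≤ r) : q ^ d < 2 ^ r := by
  have : (q : ℝ) ^ d < 2 ^ r := calc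
    (q : ℝ) ^ d < (2 ^ x) ^ d := pow_lt_pow_left₀ hq q.cast_nonneg hd
    _ = 2 ^ (x * d) := (Real.rpow_mul_natCast zero_le_two x d).symm
    _ ≤ 2 ^ (r : ℝ) := Real.rpow_le_rpow_of_exponent_le one_le_two (by linarith)
    _ = 2 ^ r := Real.rpow_natCast 2 r
  exact_mod_cast this

theorem exists_hammingDist_le_of_eqOn_s18 {ι F : Type*} [Fintype ι] [DecidableEq ι] [Zero F]
    [DecidableEq F] {u v : ι → F} {D A B : Finset ι} (huv : ∀ i ∈ D, u i = v i)
    (hu : ∀ i ∈ A, u i = 0) (hv : ∀ i ∈ B, v i = 0) (hD : Disjoint D (A ∪ B)) {s : ℕ}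
    (hs : #D + #(A ∪ B) + 2 * s ≤ Fintype.card ι) :
    ∃ y : ι → F, hammingDist y 0 ≤ #D + 2 * s ∧
      hammingDist y u + (#D + s + #A) ≤ Fintype.card ι ∧
      hammingDist y v + (#D + s + #B) ≤ Fintype.card ι := by
  set W := (D ∪ (A ∪ B))ᶜ
  have hW : 2 * s ≤ #W := by
    rw [card_compl, card_union_of_disjoint hD]; omega
  obtain ⟨Su, hSuW, hSu⟩ := exists_subset_card_eq (show s ≤ #W by omega)
  obtain ⟨Sv, hSvW, hSv⟩ := exists_subset_card_eq (show s ≤ #(W \ Su) by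
    rw [card_sdiff_of_subset hSuW]; omega)
  -- `y` agrees with `u` on `D ∪ Su ∪ A`, with `v` on `D ∪ Sv ∪ B`, and with `0` off `D ∪ Su ∪ Sv`
  set y : ι → F := fun i => if i ∈ D ∪ Su then u i else if i ∈ Sv then v i else 0
  have hD' : ∀ i ∈ D, i ∉ A ∧ i ∉ B := fun i hi => by simpa using disjoint_left.1 hD hi
  have hSuW' : ∀ i ∈ Su, i ∉ D ∧ i ∉ A ∧ i ∉ B := fun i hi => by
    simpa [W] using hSuW hi
  have hSvW' : ∀ i ∈ Sv, i ∉ Su ∧ i ∉ D ∧ i ∉ A ∧ i ∉ B := fun i hi => by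
    simpa [W, and_comm] using hSvW hi
  refine ⟨y, ?_, ?_, ?_⟩
  · have h := hammingDist_add_card_le_of_eqOn (x := y) (y := 0) (S := (D ∪ Su ∪ Sv)ᶜ)
      (by intro i hi; simp_all [y])
    have := card_union_le (D ∪ Su) Sv
    have := card_union_le D Su
    rw [card_compl] at h
    have := card_le_univ (D ∪ Su ∪ Sv)
    omega
  · have h := hammingDist_add_card_le_of_eqOn (x := y) (y := u) (S := D ∪ Su ∪ A) fun i hi => by
      grind
    rwa [card_union_of_disjoint, card_union_of_disjoint, hSu] at h
    · exact disjoint_left.2 fun i hi hi' => (hSuW' i hi').1 hi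
    · grind [disjoint_left]
  · have h := hammingDist_add_card_le_of_eqOn (x := y) (y := v) (S := D ∪ Sv ∪ B) fun i hi => by
      grind
    rwa [card_union_of_disjoint, card_union_of_disjoint, hSv] at h
    · exact disjoint_left.2 fun i hi hi' => (hSvW' i hi').2.1 hi
    · grind [disjoint_left]

section MDS

variable {ι F : Type*} [Fintype ι] [DecidableEq ι] [Field F] [DecidableEq F]
  {C : Submodule F (ι → F)} {k : ℕ}

theorem exists_mem_forall_eq_zero_iff_mem (hdim : Module.finrank F C = k)
    (hdist : ∀ c₁ ∈ C, ∀ c₂ ∈ C, c₁ ≠ c₂ → Fintype.card ι - k + 1 ≤ hammingDist c₁ c₂)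
    {A : Finset ι} (hA : #A + 1 = k) : ∃ u ∈ C, ∀ i, u i = 0 ↔ i ∈ A := by
  let restrict : C →ₗ[F] (A → F) := (LinearMap.funLeft F F Subtype.val).comp C.subtype
  have hker : LinearMap.ker restrict ≠ ⊥ :=
    LinearMap.ker_ne_bot_of_finrank_lt (by simp [hdim, ← hA])
  obtain ⟨⟨u, huC⟩, hu, hu0⟩ := (Submodule.ne_bot_iff _).1 hker
  have huA : ∀ i ∈ A, u i = 0 := fun i hi => congrFun (LinearMap.mem_ker.1 hu) ⟨i, hi⟩
  refine ⟨u, huC, fun i => ⟨fun hi => ?_, huA i⟩⟩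
  by_contra hiA
  have hu0 : u ≠ 0 := fun h => hu0 (Subtype.ext h)
  have hle := hammingDist_add_card_le_of_eqOn (x := u) (y := 0) (S := insert i A)
    (by simpa [forall_mem_insert, hi] using huA)
  have := hdist u huC 0 C.zero_mem hu0
  rw [card_insert_of_notMem hiA] at hle
  omega

theorem exists_ne_eqOn_of_card_lt [Fintype F] (hdim : Module.finrank F C = k)
    (hdist : ∀ c₁ ∈ C, ∀ c₂ ∈ C, c₁ ≠ c₂ → Fintype.card ι - k + 1 ≤ hammingDist c₁ c₂)
    {𝒜 : Finset (Finset ι)} (h𝒜 : ∀ A ∈ 𝒜, #A + 1 = k) (D : Finset ι)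
    (hcard : Fintype.card F ^ #D < #𝒜) :
    ∃ A ∈ 𝒜, ∃ B ∈ 𝒜, A ≠ B ∧ ∃ u ∈ C, ∃ v ∈ C,
      (∀ i, u i = 0 ↔ i ∈ A) ∧ (∀ i, v i = 0 ↔ i ∈ B) ∧ ∀ i ∈ D, u i = v i := by
  choose! u huC hu using fun A hA => exists_mem_forall_eq_zero_iff_mem hdim hdist (h𝒜 A hA)
  have hholes : #(univ : Finset (D → F)) < #𝒜 := by simpa using hcard
  obtain ⟨A, hA, B, hB, hAB, huv⟩ := exists_ne_map_eq_of_card_lt_of_maps_to hholes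
    (f := fun A (i : D) => u A i) (fun _ _ => mem_coe.2 (mem_univ _))
  exact ⟨A, hA, B, hB, hAB, u A, huC A hA, u B, huC B hB, hu A hA, hu B hB,
    fun i hi => congrFun huv ⟨i, hi⟩⟩

theorem exists_ne_eqOn_of_card_lt_choose [Fintype F] (hdim : Module.finrank F C = k)
    (hdist : ∀ c₁ ∈ C, ∀ c₂ ∈ C, c₁ ≠ c₂ → Fintype.card ι - k + 1 ≤ hammingDist c₁ c₂)
    {D P : Finset ι} (hDP : Disjoint D P) {r : ℕ} (hk : #P + r + 1 = k)
    (hcard : Fintype.card F ^ #D < (Fintype.card ι - #D - #P).choose r) :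
    ∃ A B : Finset ι, A ≠ B ∧ #A + 1 = k ∧ #B + 1 = k ∧ Disjoint D (A ∪ B) ∧
      #(A ∪ B) + #P + 2 ≤ 2 * k ∧
      ∃ u ∈ C, ∃ v ∈ C,
        (∀ i, u i = 0 ↔ i ∈ A) ∧ (∀ i, v i = 0 ↔ i ∈ B) ∧ ∀ i ∈ D, u i = v i := by
  set 𝒵 := (D ∪ P)ᶜ.powersetCard r
  have h𝒵 : ∀ A ∈ 𝒵, #A = r ∧ Disjoint A D ∧ Disjoint A P := fun A hA => by
    obtain ⟨hsub, hcard⟩ := mem_powersetCard.1 hA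
    simpa [hcard, ← disjoint_union_right] using subset_compl_iff_disjoint_right.1 hsub
  have hinj : Set.InjOn (· ∪ P) 𝒵 := fun A hA B hB hAB => by
    rw [← union_sdiff_cancel_right (h𝒵 A hA).2.2, ← union_sdiff_cancel_right (h𝒵 B hB).2.2]
    exact congrArg (· \ P) hAB
  have hmem : ∀ A ∈ 𝒵, #(A ∪ P) + 1 = k := fun A hA => by
    rw [card_union_of_disjoint (h𝒵 A hA).2.2, (h𝒵 A hA).1]
    omega
  have hcard' : Fintype.card F ^ #D < #(𝒵.image (· ∪ P)) := by
    rwa [card_image_of_injOn hinj, card_powersetCard, card_compl, card_union_of_disjoint hDP,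
      ← Nat.sub_sub]
  obtain ⟨_, hA', _, hB', hAB, u, huC, v, hvC, hu, hv, huv⟩ := exists_ne_eqOn_of_card_lt hdim hdist
    (fun _ h => by obtain ⟨A, hA, rfl⟩ := mem_image.1 h; exact hmem A hA) D hcard'
  obtain ⟨A, hA, rfl⟩ := mem_image.1 hA'
  obtain ⟨B, hB, rfl⟩ := mem_image.1 hB'
  refine ⟨A ∪ P, B ∪ P, hAB, hmem A hA, hmem B hB, ?_, ?_, u, huC, v, hvC, hu, hv, huv⟩
  · simp only [disjoint_union_right]
    exact ⟨⟨(h𝒵 A hA).2.1.symm, hDP⟩, (h𝒵 B hB).2.1.symm, hDP⟩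
  · have hunion : A ∪ P ∪ (B ∪ P) = A ∪ B ∪ P := by
      ext; simp only [mem_union]; tauto
    have := card_union_le A B
    have := (h𝒵 A hA).1
    have := (h𝒵 B hB).1
    have := card_union_le (A ∪ B) P
    rw [hunion]
    omega

theorem exists_two_lt_ncard_ball_of_card_lt_choose [Fintype F] (hdim : Module.finrank F C = k)
    (hdist : ∀ c₁ ∈ C, ∀ c₂ ∈ C, c₁ ≠ c₂ → Fintype.card ι - k + 1 ≤ hammingDist c₁ c₂)
    {d t r s e : ℕ} (hd : d ≠ 0) (hdt : d + t ≤ Fintype.card ι) (hk : t + r + 1 = k)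
    (hcard : Fintype.card F ^ d < (Fintype.card ι - d - t).choose r)
    (hs : d + 2 * (k - 1) + 2 * s ≤ Fintype.card ι + t) (he₀ : d + 2 * s ≤ e)
    (he : Fintype.card ι ≤ e + d + s + (k - 1)) :
    ∃ y : ι → F, 2 < {c | c ∈ C ∧ hammingDist y c ≤ e}.ncard := by
  obtain ⟨D, -, hD⟩ := exists_subset_card_eq (show d ≤ #(univ : Finset ι) by simp; omega)
  obtain ⟨P, hPD, hP⟩ := exists_subset_card_eq (show t ≤ #Dᶜ by rw [card_compl]; omega)
  obtain ⟨A, B, hAB, hA, hB, hDAB, hABP, u, huC, v, hvC, hu, hv, huv⟩ :=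
    exists_ne_eqOn_of_card_lt_choose hdim hdist (subset_compl_iff_disjoint_left.1 hPD)
      (r := r) (by omega) (by rwa [hD, hP])
  obtain ⟨y, hy0, hyu, hyv⟩ := exists_hammingDist_le_of_eqOn_s18 (s := s) huv (fun i => (hu i).2)
    (fun i => (hv i).2) hDAB (by omega)
  obtain ⟨x₀, hx₀⟩ : D.Nonempty := card_pos.1 (by omega)
  have hu0 : u ≠ 0 := fun h =>
    disjoint_left.1 hDAB hx₀ (mem_union_left _ ((hu x₀).1 (by simp [h])))
  have hv0 : v ≠ 0 := fun h =>
    disjoint_left.1 hDAB hx₀ (mem_union_right _ ((hv x₀).1 (by simp [h])))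
  have huv : u ≠ v := fun h => hAB (ext fun i => by rw [← hu, ← hv, h])
  refine ⟨y, (Set.two_lt_ncard_iff (Set.toFinite _)).2
    ⟨0, u, v, ⟨C.zero_mem, ?_⟩, ⟨huC, ?_⟩, ⟨hvC, ?_⟩, hu0.symm, hv0.symm, huv⟩⟩ <;> omega

theorem exists_two_lt_ncard_ball_of_pow_lt [Fintype F] (hdim : Module.finrank F C = k)
    (hdist : ∀ c₁ ∈ C, ∀ c₂ ∈ C, c₁ ≠ c₂ → Fintype.card ι - k + 1 ≤ hammingDist c₁ c₂)
    (hk : 12 ≤ k) (hm : 12 ≤ Fintype.card ι - k)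
    (hq : Fintype.card F ^ 12 < 2 ^ min k (Fintype.card ι - k)) :
    ∃ y : ι → F,
      2 < {c | c ∈ C ∧ 3 * hammingDist y c ≤ 2 * (Fintype.card ι - k)}.ncard := by
  set n := Fintype.card ι
  -- `s ≈ (n - k) / 3` coordinates are copied from each of `u` and `v`, and `t` is the least
  -- overlap of their zero sets leaving room for them; then `min k (n - k) ≤ 3 * r`
  obtain ⟨s, hs⟩ : ∃ s, s = (n - k + 2) / 3 - 3 := ⟨_, rfl⟩
  obtain ⟨t, ht⟩ : ∃ t, t = 2 * s + 2 * k + 2 - n := ⟨_, rfl⟩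
  obtain ⟨r, hr⟩ : ∃ r, r = k - 1 - t := ⟨_, rfl⟩
  have hqr : Fintype.card F ^ 4 < 2 ^ r := by
    refine lt_of_pow_lt_pow_left₀ 3 (Nat.zero_le _) ?_
    rw [← pow_mul, ← pow_mul]
    exact hq.trans_le (Nat.pow_le_pow_right two_pos (by omega))
  have hcard : Fintype.card F ^ 4 < (n - 4 - t).choose r := calc
    Fintype.card F ^ 4 < 2 ^ r := hqr
    _ ≤ (2 * r).choose r := Nat.centralBinom_eq_two_mul_choose r ▸ Nat.two_pow_le_centralBinom r
    _ ≤ _ := Nat.choose_le_choose r (by omega)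
  obtain ⟨y, hy⟩ := exists_two_lt_ncard_ball_of_card_lt_choose hdim hdist (d := 4) (t := t)
    (r := r) (s := s) (e := 2 * (n - k) / 3) (by norm_num) (by omega) (by omega) hcard
    (by omega) (by omega) (by omega)
  exact ⟨y, hy.trans_le (Set.ncard_le_ncard (fun c hc => ⟨hc.1, by have := hc.2; omega⟩))⟩

end MDS

theorem stmt_18 (R : ℝ) (hR0 : 0 < R) (hR1 : R < 1) :
    ∃ α > (0 : ℝ), ∃ n₀ : ℕ, ∀ n : ℕ, n₀ ≤ n → ∀ k : ℕ, (k : ℝ) = R * n →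
      ∀ (F : Type) [Field F] [Fintype F] [DecidableEq F],
        ∀ C : Submodule F (Fin n → F), Module.finrank F C = k →
          (∀ c₁ ∈ C, ∀ c₂ ∈ C, c₁ ≠ c₂ → n - k + 1 ≤ hammingDist c₁ c₂) →
          (∀ y : Fin n → F,
            Set.ncard {c : Fin n → F | c ∈ C ∧
              (hammingDist y c : ℝ) ≤ (2 / 3 : ℝ) * (1 - R) * n} ≤ 2) →
          (2 : ℝ) ^ (α * n) ≤ (Fintype.card F : ℝ) := by
  set ρ := min R (1 - R)
  have hρ : 0 < ρ := lt_min hR0 (by linarith)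
  refine ⟨ρ / 12, by positivity, ⌈12 / ρ⌉₊, fun n hn k hk F _ _ _ C hdim hdist hLD => ?_⟩
  by_contra! hq
  have hρn : 12 ≤ ρ * n := (div_le_iff₀' hρ).1 (Nat.ceil_le.1 hn)
  have hkn : k ≤ n := by exact_mod_cast (show (k : ℝ) ≤ n by nlinarith)
  have hm : ((n - k : ℕ) : ℝ) = (1 - R) * n := by push_cast [hkn, hk]; ring
  have hρk : ρ * n ≤ k := hk ▸ mul_le_mul_of_nonneg_right (min_le_left _ _) n.cast_nonneg
  have hρm : ρ * n ≤ (n - k : ℕ) :=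
    hm ▸ mul_le_mul_of_nonneg_right (min_le_right _ _) n.cast_nonneg
  have hk12 : 12 ≤ k := by exact_mod_cast hρn.trans hρk
  have hm12 : 12 ≤ n - k := by exact_mod_cast hρn.trans hρm
  have hq12 : Fintype.card F ^ 12 < 2 ^ min k (n - k) :=
    Nat.pow_lt_two_pow_of_cast_lt_rpow hq (by norm_num) (by push_cast; linarith [le_min hρk hρm])
  obtain ⟨y, hy⟩ := exists_two_lt_ncard_ball_of_pow_lt hdim (by simpa using hdist)
    hk12 (by simpa using hm12) (by simpa using hq12)
  refine (hLD y).not_gt (hy.trans_le (Set.ncard_le_ncard fun c hc => ⟨hc.1, ?_⟩))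
  have : ((3 * hammingDist y c : ℕ) : ℝ) ≤ ((2 * (n - k) : ℕ) : ℝ) :=
    Nat.cast_le.2 (by simpa using hc.2)
  push_cast at this
  linarith
end
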